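/- Let n ≥ 1 and 0 < λ ≤ Λ, and set a := (Λ+λ)/2. There exists a constant C₅ > 0 depending only on n, λ, Λ with the following property: let f be continuous and Lebesgue integrable on B₁ × (0,1), and let v : B₁ × (0,1) → ℝ be integrable with continuous time derivative v_t and continuous spatial Hessian D²v, such that v_t and Δv are integrable on B₁ × (0,1) and v_t(x,t) − a·Δv(x,t) ≤ f(x,t) for all (x,t) ∈ B₁ × (0,1). Then ∫_{B_{1/2}×(1/3,2/3)} |v_t − a·Δv| dx dt ≤ C₅ (∫_{B₁×(0,1)} |f| dx dt + ∫_{B₁×(0,1)} |v| dx dt). -/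

import Mathlib

/-!
Write `G = v_t - a Δv` and take a cutoff `φ(x,t) = ψ(x) χ(t)` with values in `[0,1]`, equal to `1`
on `B_{1/2} × (1/3,2/3)` and compactly supported in `B₁ × (0,1)`. Since `|G| = 2 G⁺ - G` and
`G⁺ ≤ |f|`, we get `∫ |G| φ ≤ 2 ∫ |f| - ∫ G φ`. Integrating by parts in `t` and in `x` moves every
derivative onto the cutoff, `∫ G φ = ∫ v (-φ_t - a Δφ)`, and this is at most `sup |φ_t + a Δφ|`
times `∫ |v|`.
-/

open MeasureTheory Metric Set ENNReal RealInnerProductSpace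

noncomputable section

/-- The Pucci maximal operator `𝒫⁺`: for a symmetric matrix with eigenvalues `μᵢ`,
`𝒫⁺(M) = Λ ∑ max(μᵢ,0) − λ ∑ max(−μᵢ,0)` (junk value `0` on non-symmetric matrices). -/
def pucciSup {n : ℕ} (lam Lam : ℝ) (M : Matrix (Fin n) (Fin n) ℝ) : ℝ :=
  if h : M.IsHermitian then
    Lam * ∑ i, max (h.eigenvalues i) 0 - lam * ∑ i, max (-h.eigenvalues i) 0
  else 0

/-- The Pucci minimal operator `𝒫⁻`: for a symmetric matrix with eigenvalues `μᵢ`,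
`𝒫⁻(M) = λ ∑ max(μᵢ,0) − Λ ∑ max(−μᵢ,0)` (junk value `0` on non-symmetric matrices). -/
def pucciInf {n : ℕ} (lam Lam : ℝ) (M : Matrix (Fin n) (Fin n) ℝ) : ℝ :=
  if h : M.IsHermitian then
    lam * ∑ i, max (h.eigenvalues i) 0 - Lam * ∑ i, max (-h.eigenvalues i) 0
  else 0

/-- `|M|`: the sum of the absolute values of the eigenvalues of a symmetric matrix
(junk value `0` on non-symmetric matrices). -/
def matAbs {n : ℕ} (M : Matrix (Fin n) (Fin n) ℝ) : ℝ :=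
  if h : M.IsHermitian then ∑ i, |h.eigenvalues i| else 0

/-- The Hessian matrix `D²u(x)` of second-order partial derivatives. -/
def hess {n : ℕ} (u : EuclideanSpace ℝ (Fin n) → ℝ) (x : EuclideanSpace ℝ (Fin n)) :
    Matrix (Fin n) (Fin n) ℝ :=
  fun i j =>
    fderiv ℝ (fun y => fderiv ℝ u y (EuclideanSpace.single j 1)) x (EuclideanSpace.single i 1)

/-- `Q_r`: the open cube of side length `r` centered at the origin. -/
def cube (n : ℕ) (r : ℝ) : Set (EuclideanSpace ℝ (Fin n)) := {x | ∀ i, |x i| < r / 2}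

/-- `ℝ≥0∞`-valued `L_p` quasinorm `(∫_E |g|^p)^{1/p}` w.r.t. Lebesgue measure. -/
def lpE {α : Type*} [MeasureSpace α] (p : ℝ) (E : Set α) (g : α → ℝ) : ℝ≥0∞ :=
  (∫⁻ z in E, ENNReal.ofReal (|g z| ^ p)) ^ (1 / p)

theorem ContinuousOn.continuous_mul_of_tsupport_subset {X : Type*} [TopologicalSpace X]
    {F g : X → ℝ} {s : Set X} (hF : ContinuousOn F s) (hs : IsOpen s) (hg : Continuous g)
    (hgs : tsupport g ⊆ s) : Continuous fun x => F x * g x :=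
  continuous_of_tsupport fun _ hx =>
    (hF.continuousAt (hs.mem_nhds (hgs (tsupport_mul_subset_right hx)))).mul hg.continuousAt

theorem HasCompactSupport.mul_prod {X Y R : Type*} [TopologicalSpace X] [TopologicalSpace Y]
    [MulZeroClass R] {f : X → R} {g : Y → R} (hf : HasCompactSupport f)
    (hg : HasCompactSupport g) : HasCompactSupport fun z : X × Y => f z.1 * g z.2 :=
  (hf.prod hg).of_isClosed_subset (isClosed_tsupport _) <|
    closure_minimal (fun _ hz => ⟨subset_tsupport _ (left_ne_zero_of_mul hz),
      subset_tsupport _ (right_ne_zero_of_mul hz)⟩)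
      ((isClosed_tsupport f).prod (isClosed_tsupport g))

theorem MeasureTheory.IntegrableOn.mul_continuous_of_hasCompactSupport {X : Type*}
    [TopologicalSpace X] [MeasurableSpace X] [OpensMeasurableSpace X] {μ : Measure X} {s : Set X}
    {F φ : X → ℝ} (hF : IntegrableOn F s μ) (hφ : Continuous φ) (hφc : HasCompactSupport φ) :
    IntegrableOn (fun z => F z * φ z) s μ :=
  hF.mul_of_top_left (hφ.memLp_top_of_hasCompactSupport hφc _)

theorem setIntegral_prod_symm {α β : Type*} [MeasurableSpace α] [MeasurableSpace β]
    {μ : Measure α} {ν : Measure β} [SFinite μ] [SFinite ν] (f : α × β → ℝ) {s : Set α}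
    {t : Set β} (hf : IntegrableOn f (s ×ˢ t) (μ.prod ν)) :
    ∫ z in s ×ˢ t, f z ∂μ.prod ν = ∫ y in t, ∫ x in s, f (x, y) ∂μ ∂ν := by
  simp only [← Measure.prod_restrict s t, IntegrableOn] at hf ⊢
  exact integral_prod_symm f hf

theorem ContDiffOn.fderiv_apply_of_isOpen {E F : Type*} [NormedAddCommGroup E] [NormedSpace ℝ E]
    [NormedAddCommGroup F] [NormedSpace ℝ F] {f : E → F} {s : Set E} {m n : WithTop ℕ∞}
    (hf : ContDiffOn ℝ n f s) (hs : IsOpen s) (hmn : m + 1 ≤ n) (v : E) :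
    ContDiffOn ℝ m (fderiv ℝ f · v) s :=
  (hf.fderiv_of_isOpen hs hmn).clm_apply contDiffOn_const

theorem contDiffOn_one_of_differentiableAt_of_continuousOn_deriv {f : ℝ → ℝ} {t : Set ℝ}
    (ht : IsOpen t) (hf : ∀ τ ∈ t, DifferentiableAt ℝ f τ) (hf' : ContinuousOn (deriv f) t) :
    ContDiffOn ℝ 1 f t :=
  (contDiffOn_succ_iff_deriv_of_isOpen (n := 0) ht).2
    ⟨fun τ hτ => (hf τ hτ).differentiableWithinAt, by simp, contDiffOn_zero.2 hf'⟩

section LocalIntegrationByParts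

variable {E : Type*} [NormedAddCommGroup E] [NormedSpace ℝ E] {s : Set E}

theorem ContDiffOn.continuousOn_fderiv_fderiv_apply {u : E → ℝ} (hu : ContDiffOn ℝ 2 u s)
    (hs : IsOpen s) (v w : E) : ContinuousOn (fun x => fderiv ℝ (fderiv ℝ u · v) x w) s :=
  ((hu.fderiv_apply_of_isOpen (m := 1) hs (by norm_num) v).fderiv_apply_of_isOpen (m := 0) hs
    (by simp) w).continuousOn

variable [FiniteDimensional ℝ E] [MeasurableSpace E] [BorelSpace E] {μ : Measure E}
  [μ.IsAddHaarMeasure]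

theorem setIntegral_fderiv_mul_eq_neg_mul_fderiv {f g : E → ℝ} (hs : IsOpen s)
    (hf : ContDiffOn ℝ 1 f s) (hg : ContDiff ℝ 1 g) (hgc : HasCompactSupport g)
    (hgs : tsupport g ⊆ s) (v : E) :
    ∫ x in s, fderiv ℝ f x v * g x ∂μ = -∫ x in s, f x * fderiv ℝ g x v ∂μ := by
  have hg's : tsupport (fderiv ℝ g · v) ⊆ s := (tsupport_fderiv_apply_subset ℝ v).trans hgs
  have hf' : ContinuousOn (fderiv ℝ f · v) s :=
    (hf.fderiv_apply_of_isOpen (m := 0) hs (by simp) v).continuousOn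
  have hg' : Continuous (fderiv ℝ g · v) :=
    (hg.continuous_fderiv one_ne_zero).clm_apply continuous_const
  rw [setIntegral_eq_integral_of_forall_compl_eq_zero fun x hx => by
      rw [image_eq_zero_of_notMem_tsupport fun h => hx (hgs h), mul_zero],
    setIntegral_eq_integral_of_forall_compl_eq_zero fun x hx => by
      rw [image_eq_zero_of_notMem_tsupport fun h => hx (hg's h), mul_zero],
    integral_mul_fderiv_eq_neg_fderiv_mul_of_integrable, neg_neg]
  · exact (hf'.continuous_mul_of_tsupport_subset hs hg.continuous hgs
      ).integrable_of_hasCompactSupport hgc.mul_left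
  · exact (hf.continuousOn.continuous_mul_of_tsupport_subset hs hg' hg's
      ).integrable_of_hasCompactSupport (hgc.fderiv_apply ℝ v).mul_left
  · exact (hf.continuousOn.continuous_mul_of_tsupport_subset hs hg.continuous hgs
      ).integrable_of_hasCompactSupport hgc.mul_left
  · exact fun x hx => (hf.differentiableOn one_ne_zero x (hgs hx)).differentiableAt
      (hs.mem_nhds (hgs hx))
  · exact fun x _ => hg.differentiable one_ne_zero x

theorem setIntegral_fderiv_fderiv_mul_eq_mul_fderiv_fderiv {u ψ : E → ℝ} (hs : IsOpen s)
    (hu : ContDiffOn ℝ 2 u s) (hψ : ContDiff ℝ 2 ψ) (hψc : HasCompactSupport ψ)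
    (hψs : tsupport ψ ⊆ s) (v : E) :
    ∫ x in s, fderiv ℝ (fderiv ℝ u · v) x v * ψ x ∂μ =
      ∫ x in s, u x * fderiv ℝ (fderiv ℝ ψ · v) x v ∂μ := by
  rw [setIntegral_fderiv_mul_eq_neg_mul_fderiv hs
      (hu.fderiv_apply_of_isOpen hs (by norm_num) v) (hψ.of_le one_le_two) hψc hψs,
    setIntegral_fderiv_mul_eq_neg_mul_fderiv hs (hu.of_le one_le_two)
      ((hψ.fderiv_right (m := 1) (by norm_num)).clm_apply contDiff_const)
      (hψc.fderiv_apply ℝ v) ((tsupport_fderiv_apply_subset ℝ v).trans hψs),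
    neg_neg]

end LocalIntegrationByParts

section Hessian

variable {n : ℕ} {μ : Measure (EuclideanSpace ℝ (Fin n))} [μ.IsAddHaarMeasure]
  {s : Set (EuclideanSpace ℝ (Fin n))} {u ψ : EuclideanSpace ℝ (Fin n) → ℝ}

theorem trace_hess (u : EuclideanSpace ℝ (Fin n) → ℝ) (x : EuclideanSpace ℝ (Fin n)) :
    (hess u x).trace = ∑ i, fderiv ℝ (fderiv ℝ u · (EuclideanSpace.single i 1)) x
      (EuclideanSpace.single i 1) :=
  rfl

theorem hess_eq_zero_of_notMem_tsupport {x : EuclideanSpace ℝ (Fin n)} (hx : x ∉ tsupport u) :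
    hess u x = 0 := by
  ext i j
  have hx' : x ∉ tsupport (fderiv ℝ u · (EuclideanSpace.single j 1)) :=
    fun h => hx (tsupport_fderiv_apply_subset ℝ _ h)
  simp [hess, fderiv_of_notMem_tsupport ℝ hx']

theorem HasCompactSupport.trace_hess (hu : HasCompactSupport u) :
    HasCompactSupport fun x => (hess u x).trace :=
  hu.mono' fun x hx => by_contra fun h => hx (by simp [hess_eq_zero_of_notMem_tsupport h])

theorem ContDiff.continuous_trace_hess (hu : ContDiff ℝ 2 u) :
    Continuous fun x => (hess u x).trace :=
  continuous_finsetSum _ fun _ _ => continuousOn_univ.1 <|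
    hu.contDiffOn.continuousOn_fderiv_fderiv_apply isOpen_univ _ _

theorem setIntegral_trace_hess_mul_eq_mul_trace_hess (hs : IsOpen s) (hu : ContDiffOn ℝ 2 u s)
    (hψ : ContDiff ℝ 2 ψ) (hψc : HasCompactSupport ψ) (hψs : tsupport ψ ⊆ s) :
    ∫ x in s, (hess u x).trace * ψ x ∂μ = ∫ x in s, u x * (hess ψ x).trace ∂μ := by
  have hleft (v : EuclideanSpace ℝ (Fin n)) :
      IntegrableOn (fun x => fderiv ℝ (fderiv ℝ u · v) x v * ψ x) s μ :=
    ((hu.continuousOn_fderiv_fderiv_apply hs v v).continuous_mul_of_tsupport_subset hs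
      hψ.continuous hψs).integrable_of_hasCompactSupport hψc.mul_left |>.integrableOn
  have hright (v : EuclideanSpace ℝ (Fin n)) :
      IntegrableOn (fun x => u x * fderiv ℝ (fderiv ℝ ψ · v) x v) s μ :=
    (hu.continuousOn.continuous_mul_of_tsupport_subset hs
      (continuousOn_univ.1 <| hψ.contDiffOn.continuousOn_fderiv_fderiv_apply isOpen_univ v v)
      ((tsupport_fderiv_apply_subset ℝ v).trans <| (tsupport_fderiv_apply_subset ℝ v).trans hψs)
      ).integrable_of_hasCompactSupport
      ((hψc.fderiv_apply ℝ v).fderiv_apply ℝ v).mul_left |>.integrableOn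
  simp only [trace_hess, Finset.sum_mul, Finset.mul_sum]
  rw [integral_finsetSum _ fun _ _ => hleft _, integral_finsetSum _ fun _ _ => hright _]
  exact Finset.sum_congr rfl fun i _ =>
    setIntegral_fderiv_fderiv_mul_eq_mul_fderiv_fderiv hs hu hψ hψc hψs _

end Hessian

section SpaceTime

variable {X : Type*} [TopologicalSpace X] [MeasurableSpace X] [OpensMeasurableSpace X]
  {μ : Measure X} [SFinite μ] {s : Set X} {t : Set ℝ}

theorem setIntegral_prod_deriv_mul_eq_neg_mul_deriv {v : X → ℝ → ℝ} {ψ : X → ℝ} {χ : ℝ → ℝ}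
    (hs : MeasurableSet s) (ht : IsOpen t) (hv : ∀ x ∈ s, ContDiffOn ℝ 1 (v x) t)
    (hvi : IntegrableOn (fun z => v z.1 z.2) (s ×ˢ t) (μ.prod volume))
    (hvti : IntegrableOn (fun z => deriv (v z.1) z.2) (s ×ˢ t) (μ.prod volume))
    (hψ : Continuous ψ) (hψc : HasCompactSupport ψ) (hχ : ContDiff ℝ 1 χ)
    (hχc : HasCompactSupport χ) (hχt : tsupport χ ⊆ t) :
    ∫ z in s ×ˢ t, deriv (v z.1) z.2 * (ψ z.1 * χ z.2) ∂μ.prod volume =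
      -∫ z in s ×ˢ t, v z.1 z.2 * (ψ z.1 * deriv χ z.2) ∂μ.prod volume := by
  have hχ' : Continuous (deriv χ) := hχ.continuous_deriv le_rfl
  rw [setIntegral_prod _ (hvti.mul_continuous_of_hasCompactSupport (by fun_prop)
      (hψc.mul_prod hχc)),
    setIntegral_prod _ (hvi.mul_continuous_of_hasCompactSupport (by fun_prop)
      (hψc.mul_prod hχc.deriv)), ← integral_neg]
  refine setIntegral_congr_fun hs fun x hx => ?_
  have := setIntegral_fderiv_mul_eq_neg_mul_fderiv (μ := volume) ht (hv x hx) hχ hχc hχt 1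
  simp only [fderiv_apply_one_eq_deriv] at this
  simp_rw [mul_left_comm _ (ψ x), integral_const_mul, this, mul_neg]

end SpaceTime

theorem setIntegral_prod_trace_hess_mul_eq {n : ℕ} {μ : Measure (EuclideanSpace ℝ (Fin n))}
    [μ.IsAddHaarMeasure] {ν : Measure ℝ} [SFinite ν] {v : EuclideanSpace ℝ (Fin n) → ℝ → ℝ}
    {ψ : EuclideanSpace ℝ (Fin n) → ℝ} {χ : ℝ → ℝ} {s : Set (EuclideanSpace ℝ (Fin n))}
    {t : Set ℝ} (hs : IsOpen s) (ht : MeasurableSet t)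
    (hv : ∀ τ ∈ t, ContDiffOn ℝ 2 (fun y => v y τ) s)
    (hvi : IntegrableOn (fun z => v z.1 z.2) (s ×ˢ t) (μ.prod ν))
    (hΔvi : IntegrableOn (fun z => (hess (fun y => v y z.2) z.1).trace) (s ×ˢ t) (μ.prod ν))
    (hψ : ContDiff ℝ 2 ψ) (hψc : HasCompactSupport ψ) (hψs : tsupport ψ ⊆ s)
    (hχ : Continuous χ) (hχc : HasCompactSupport χ) :
    ∫ z in s ×ˢ t, (hess (fun y => v y z.2) z.1).trace * (ψ z.1 * χ z.2) ∂μ.prod ν =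
      ∫ z in s ×ˢ t, v z.1 z.2 * ((hess ψ z.1).trace * χ z.2) ∂μ.prod ν := by
  have hΔψχ : Continuous fun z : EuclideanSpace ℝ (Fin n) × ℝ => (hess ψ z.1).trace * χ z.2 :=
    hψ.continuous_trace_hess.fst'.mul hχ.snd'
  rw [setIntegral_prod_symm _ (hΔvi.mul_continuous_of_hasCompactSupport
      (by fun_prop) (hψc.mul_prod hχc)),
    setIntegral_prod_symm _ (hvi.mul_continuous_of_hasCompactSupport hΔψχ
      (hψc.trace_hess.mul_prod hχc))]
  refine setIntegral_congr_fun ht fun τ hτ => ?_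
  simp_rw [← mul_assoc, integral_mul_const]
  rw [setIntegral_trace_hess_mul_eq_mul_trace_hess hs (hv τ hτ) hψ hψc hψs]

/-- `(-∂ₜ - a Δ)(ψ ⊗ χ)`: the formal adjoint of the heat operator `∂ₜ - a Δ` applied to
`(x, t) ↦ ψ x * χ t`. -/
def heatAdjointProd {n : ℕ} (a : ℝ) (ψ : EuclideanSpace ℝ (Fin n) → ℝ) (χ : ℝ → ℝ)
    (z : EuclideanSpace ℝ (Fin n) × ℝ) : ℝ :=
  -(ψ z.1 * deriv χ z.2) - a * ((hess ψ z.1).trace * χ z.2)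

theorem exists_abs_heatAdjointProd_le {n : ℕ} (a : ℝ) {ψ : EuclideanSpace ℝ (Fin n) → ℝ}
    {χ : ℝ → ℝ} (hψ : ContDiff ℝ 2 ψ) (hψc : HasCompactSupport ψ) (hχ : ContDiff ℝ 1 χ)
    (hχc : HasCompactSupport χ) : ∃ M, ∀ z, |heatAdjointProd a ψ χ z| ≤ M :=
  Continuous.bounded_above_of_compact_support
    ((hψ.continuous.fst'.mul (hχ.continuous_deriv le_rfl).snd').neg.sub
      (continuous_const.mul (hψ.continuous_trace_hess.fst'.mul hχ.continuous.snd')))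
    ((hψc.mul_prod hχc.deriv).neg.sub ((hψc.trace_hess.mul_prod hχc).mul_left))

theorem setIntegral_heat_mul_eq_mul_heatAdjointProd {n : ℕ} {μ : Measure (EuclideanSpace ℝ (Fin n))}
    [μ.IsAddHaarMeasure] (a : ℝ) {v : EuclideanSpace ℝ (Fin n) → ℝ → ℝ}
    {ψ : EuclideanSpace ℝ (Fin n) → ℝ} {χ : ℝ → ℝ} {s : Set (EuclideanSpace ℝ (Fin n))}
    {t : Set ℝ} (hs : IsOpen s) (ht : IsOpen t)
    (hv₁ : ∀ x ∈ s, ContDiffOn ℝ 1 (v x) t) (hv₂ : ∀ τ ∈ t, ContDiffOn ℝ 2 (fun y => v y τ) s)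
    (hvi : IntegrableOn (fun z => v z.1 z.2) (s ×ˢ t) (μ.prod volume))
    (hvti : IntegrableOn (fun z => deriv (v z.1) z.2) (s ×ˢ t) (μ.prod volume))
    (hΔvi : IntegrableOn (fun z => (hess (fun y => v y z.2) z.1).trace) (s ×ˢ t)
      (μ.prod volume))
    (hψ : ContDiff ℝ 2 ψ) (hψc : HasCompactSupport ψ) (hψs : tsupport ψ ⊆ s)
    (hχ : ContDiff ℝ 1 χ) (hχc : HasCompactSupport χ) (hχt : tsupport χ ⊆ t) :
    ∫ z in s ×ˢ t, (deriv (v z.1) z.2 - a * (hess (fun y => v y z.2) z.1).trace) *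
        (ψ z.1 * χ z.2) ∂μ.prod volume =
      ∫ z in s ×ˢ t, v z.1 z.2 * heatAdjointProd a ψ χ z ∂μ.prod volume := by
  have hφ : Continuous fun z : EuclideanSpace ℝ (Fin n) × ℝ => ψ z.1 * χ z.2 :=
    hψ.continuous.fst'.mul hχ.continuous.snd'
  have hψχ' : Continuous fun z : EuclideanSpace ℝ (Fin n) × ℝ => ψ z.1 * deriv χ z.2 :=
    hψ.continuous.fst'.mul (hχ.continuous_deriv le_rfl).snd'
  have hΔψχ : Continuous fun z : EuclideanSpace ℝ (Fin n) × ℝ => (hess ψ z.1).trace * χ z.2 :=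
    hψ.continuous_trace_hess.fst'.mul hχ.continuous.snd'
  have h₁ := hvti.mul_continuous_of_hasCompactSupport hφ (hψc.mul_prod hχc)
  have h₂ := hΔvi.mul_continuous_of_hasCompactSupport hφ (hψc.mul_prod hχc)
  have h₃ := hvi.mul_continuous_of_hasCompactSupport hψχ' (hψc.mul_prod hχc.deriv)
  have h₄ := hvi.mul_continuous_of_hasCompactSupport hΔψχ (hψc.trace_hess.mul_prod hχc)
  calc _ = ∫ z in s ×ˢ t, deriv (v z.1) z.2 * (ψ z.1 * χ z.2) -
          a * ((hess (fun y => v y z.2) z.1).trace * (ψ z.1 * χ z.2)) ∂μ.prod volume := by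
        congr 1; funext z; ring
    _ = -∫ z in s ×ˢ t, v z.1 z.2 * (ψ z.1 * deriv χ z.2) ∂μ.prod volume -
          a * ∫ z in s ×ˢ t, v z.1 z.2 * ((hess ψ z.1).trace * χ z.2) ∂μ.prod volume := by
        rw [integral_sub h₁ (h₂.const_mul a), integral_const_mul,
          setIntegral_prod_deriv_mul_eq_neg_mul_deriv hs.measurableSet ht hv₁ hvi hvti
            hψ.continuous hψc hχ hχc hχt,
          setIntegral_prod_trace_hess_mul_eq hs ht.measurableSet hv₂ hvi hΔvi hψ hψc hψs
            hχ.continuous hχc]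
    _ = _ := by
        rw [← integral_neg, ← integral_const_mul, ← integral_sub]
        · congr 1; funext z; rw [heatAdjointProd]; ring
        · exact h₃.neg
        · exact h₄.const_mul a

theorem abs_setIntegral_mul_le {α : Type*} [MeasurableSpace α] {μ : Measure α} {s : Set α}
    {F k : α → ℝ} {M : ℝ} (hF : IntegrableOn F s μ) (hk : ∀ z, |k z| ≤ M) :
    |∫ z in s, F z * k z ∂μ| ≤ M * ∫ z in s, |F z| ∂μ := by
  rw [← integral_const_mul M, ← Real.norm_eq_abs]
  refine norm_integral_le_of_norm_le (hF.abs.const_mul M)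
    (Filter.Eventually.of_forall fun z => ?_)
  rw [Real.norm_eq_abs, abs_mul, mul_comm]
  exact mul_le_mul_of_nonneg_right (hk z) (abs_nonneg _)

theorem setIntegral_abs_le_of_le_of_cutoff {α : Type*} [MeasurableSpace α] {μ : Measure α}
    {s t : Set α} {G f φ : α → ℝ} (hs : MeasurableSet s) (ht : MeasurableSet t) (hts : t ⊆ s)
    (hG : IntegrableOn G s μ) (hf : IntegrableOn f s μ)
    (hφ : AEStronglyMeasurable φ (μ.restrict s)) (hφ₀ : ∀ z, 0 ≤ φ z) (hφ₁ : ∀ z, φ z ≤ 1)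
    (hφt : ∀ z ∈ t, φ z = 1) (hGf : ∀ z ∈ s, G z ≤ f z) :
    ∫ z in t, |G z| ∂μ ≤ 2 * ∫ z in s, |f z| ∂μ - ∫ z in s, G z * φ z ∂μ := by
  have hφ_bdd : ∀ᵐ z ∂μ.restrict s, ‖φ z‖ ≤ 1 :=
    Filter.Eventually.of_forall fun z => by rw [Real.norm_of_nonneg (hφ₀ z)]; exact hφ₁ z
  have hGφ : IntegrableOn (fun z => G z * φ z) s μ := hG.mul_bdd hφ hφ_bdd
  have hGφ_abs : IntegrableOn (fun z => |G z| * φ z) s μ := hG.abs.mul_bdd hφ hφ_bdd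
  calc ∫ z in t, |G z| ∂μ = ∫ z in t, |G z| * φ z ∂μ :=
        setIntegral_congr_fun ht fun z hz => by rw [hφt z hz, mul_one]
    _ ≤ ∫ z in s, |G z| * φ z ∂μ :=
        setIntegral_mono_set hGφ_abs
          (Filter.Eventually.of_forall fun z => mul_nonneg (abs_nonneg _) (hφ₀ z))
          hts.eventuallyLE
    _ ≤ ∫ z in s, (2 * |f z| - G z * φ z) ∂μ := by
        refine setIntegral_mono_on hGφ_abs ((hf.abs.const_mul 2).sub hGφ) hs fun z hz => ?_
        have hpos : |G z| + G z ≤ 2 * |f z| := by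
          cases abs_cases (G z) <;> linarith [le_abs_self (f z), abs_nonneg (f z), hGf z hz]
        nlinarith [hφ₀ z, hφ₁ z, abs_nonneg (G z), neg_abs_le (G z)]
    _ = 2 * ∫ z in s, |f z| ∂μ - ∫ z in s, G z * φ z ∂μ := by
        rw [integral_sub (hf.abs.const_mul 2) hGφ, integral_const_mul]

def spaceCutoff (n : ℕ) : ContDiffBump (0 : EuclideanSpace ℝ (Fin n)) :=
  ⟨1/2, 3/4, by norm_num, by norm_num⟩

def timeCutoff : ContDiffBump (1/2 : ℝ) := ⟨1/6, 1/4, by norm_num, by norm_num⟩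

theorem tsupport_spaceCutoff_subset (n : ℕ) : tsupport (spaceCutoff n) ⊆ ball 0 1 := by
  rw [ContDiffBump.tsupport_eq]
  exact closedBall_subset_ball (by norm_num [spaceCutoff])

theorem tsupport_timeCutoff_subset : tsupport timeCutoff ⊆ Ioo 0 1 := by
  rw [ContDiffBump.tsupport_eq, Real.closedBall_eq_Icc]
  exact Icc_subset_Ioo (by norm_num [timeCutoff]) (by norm_num [timeCutoff])

theorem spaceCutoff_mul_timeCutoff_eq_one {n : ℕ} :
    ∀ z ∈ ball (0 : EuclideanSpace ℝ (Fin n)) (1/2) ×ˢ Ioo (1/3 : ℝ) (2/3),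
      spaceCutoff n z.1 * timeCutoff z.2 = 1 := by
  rintro ⟨x, τ⟩ ⟨hx, hτ⟩
  have hτ' : τ ∈ closedBall (1/2 : ℝ) (1/6) := by
    rw [Real.closedBall_eq_Icc]; constructor <;> linarith [hτ.1, hτ.2]
  rw [(spaceCutoff n).one_of_mem_closedBall (ball_subset_closedBall hx),
    timeCutoff.one_of_mem_closedBall hτ', mul_one]

theorem stmt7_general (n : ℕ) (lam Lam : ℝ) :
    ∃ C₅ > (0:ℝ),
      ∀ f v : EuclideanSpace ℝ (Fin n) → ℝ → ℝ,
        ContinuousOn (fun p : EuclideanSpace ℝ (Fin n) × ℝ => f p.1 p.2)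
          (ball 0 1 ×ˢ Ioo (0:ℝ) 1) →
        IntegrableOn (fun p : EuclideanSpace ℝ (Fin n) × ℝ => f p.1 p.2)
          (ball 0 1 ×ˢ Ioo (0:ℝ) 1) →
        IntegrableOn (fun p : EuclideanSpace ℝ (Fin n) × ℝ => v p.1 p.2)
          (ball 0 1 ×ˢ Ioo (0:ℝ) 1) →
        (∀ p ∈ ball (0 : EuclideanSpace ℝ (Fin n)) 1 ×ˢ Ioo (0:ℝ) 1,
          DifferentiableAt ℝ (v p.1) p.2) →
        ContinuousOn (fun p : EuclideanSpace ℝ (Fin n) × ℝ => deriv (v p.1) p.2)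
          (ball 0 1 ×ˢ Ioo (0:ℝ) 1) →
        (∀ t ∈ Ioo (0:ℝ) 1, ContDiffOn ℝ 2 (fun y => v y t) (ball 0 1)) →
        ContinuousOn (fun p : EuclideanSpace ℝ (Fin n) × ℝ => hess (fun y => v y p.2) p.1)
          (ball 0 1 ×ˢ Ioo (0:ℝ) 1) →
        IntegrableOn (fun p : EuclideanSpace ℝ (Fin n) × ℝ => deriv (v p.1) p.2)
          (ball 0 1 ×ˢ Ioo (0:ℝ) 1) →
        IntegrableOn
          (fun p : EuclideanSpace ℝ (Fin n) × ℝ => Matrix.trace (hess (fun y => v y p.2) p.1))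
          (ball 0 1 ×ˢ Ioo (0:ℝ) 1) →
        (∀ p ∈ ball (0 : EuclideanSpace ℝ (Fin n)) 1 ×ˢ Ioo (0:ℝ) 1,
          deriv (v p.1) p.2 - (Lam + lam) / 2 * Matrix.trace (hess (fun y => v y p.2) p.1) ≤
            f p.1 p.2) →
        ∫ p in ball (0 : EuclideanSpace ℝ (Fin n)) (1/2) ×ˢ Ioo (1/3 : ℝ) (2/3),
            |deriv (v p.1) p.2 - (Lam + lam) / 2 * Matrix.trace (hess (fun y => v y p.2) p.1)| ≤
          C₅ * ((∫ p in ball (0 : EuclideanSpace ℝ (Fin n)) 1 ×ˢ Ioo (0:ℝ) 1, |f p.1 p.2|) +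
            ∫ p in ball (0 : EuclideanSpace ℝ (Fin n)) 1 ×ˢ Ioo (0:ℝ) 1, |v p.1 p.2|) := by
  set ψ := spaceCutoff n
  set χ := timeCutoff
  set a := (Lam + lam) / 2
  set Q := ball (0 : EuclideanSpace ℝ (Fin n)) 1 ×ˢ Ioo (0:ℝ) 1
  have hQ : MeasurableSet Q := measurableSet_ball.prod measurableSet_Ioo
  obtain ⟨M, hM⟩ := exists_abs_heatAdjointProd_le a ψ.contDiff ψ.hasCompactSupport
    (χ.contDiff (n := 1)) χ.hasCompactSupport
  refine ⟨2 + |M|, by positivity, fun f v _ hfi hvi hvd hvtc hv₂ _ hvti hΔvi hGf => ?_⟩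
  have hv₁ (x) (hx : x ∈ ball 0 1) : ContDiffOn ℝ 1 (v x) (Ioo 0 1) :=
    contDiffOn_one_of_differentiableAt_of_continuousOn_deriv isOpen_Ioo
      (fun τ hτ => hvd (x, τ) ⟨hx, hτ⟩)
      (hvtc.comp (by fun_prop : Continuous fun τ : ℝ => (x, τ)).continuousOn fun _ hτ => ⟨hx, hτ⟩)
  have hadjoint := setIntegral_heat_mul_eq_mul_heatAdjointProd a isOpen_ball isOpen_Ioo hv₁ hv₂
    hvi hvti hΔvi ψ.contDiff ψ.hasCompactSupport (tsupport_spaceCutoff_subset n) χ.contDiff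
    χ.hasCompactSupport tsupport_timeCutoff_subset
  rw [← Measure.volume_eq_prod] at hadjoint
  have hvk := abs_setIntegral_mul_le hvi fun z => (hM z).trans (le_abs_self M)
  have hF₀ : 0 ≤ ∫ z in Q, |f z.1 z.2| := setIntegral_nonneg hQ fun _ _ => abs_nonneg _
  have hV₀ : 0 ≤ ∫ z in Q, |v z.1 z.2| := setIntegral_nonneg hQ fun _ _ => abs_nonneg _
  calc _ ≤ 2 * (∫ z in Q, |f z.1 z.2|) - ∫ z in Q,
          (deriv (v z.1) z.2 - a * (hess (fun y => v y z.2) z.1).trace) * (ψ z.1 * χ z.2) :=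
        setIntegral_abs_le_of_le_of_cutoff hQ (measurableSet_ball.prod measurableSet_Ioo)
          (prod_mono (ball_subset_ball (by norm_num)) (Ioo_subset_Ioo (by norm_num) (by norm_num)))
          (hvti.sub (hΔvi.const_mul a)) hfi
          (ψ.continuous.fst'.mul χ.continuous.snd').aestronglyMeasurable
          (fun _ => mul_nonneg ψ.nonneg χ.nonneg)
          (fun _ => mul_le_one₀ ψ.le_one χ.nonneg χ.le_one)
          spaceCutoff_mul_timeCutoff_eq_one hGf
    _ = 2 * (∫ z in Q, |f z.1 z.2|) - ∫ z in Q, v z.1 z.2 * heatAdjointProd a ψ χ z := by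
        rw [hadjoint]
    _ ≤ _ := by
        nlinarith [neg_abs_le (∫ z in Q, v z.1 z.2 * heatAdjointProd a ψ χ z), abs_nonneg M]

/-- `L_1` estimate for the heat operator applied to subsolutions (Lemma `l1`). -/
theorem stmt7 (n : ℕ) (hn : 1 ≤ n) (lam Lam : ℝ) (hlam : 0 < lam) (hLam : lam ≤ Lam) :
    ∃ C₅ > (0:ℝ),
      ∀ f v : EuclideanSpace ℝ (Fin n) → ℝ → ℝ,
        ContinuousOn (fun p : EuclideanSpace ℝ (Fin n) × ℝ => f p.1 p.2)
          (ball 0 1 ×ˢ Ioo (0:ℝ) 1) →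
        IntegrableOn (fun p : EuclideanSpace ℝ (Fin n) × ℝ => f p.1 p.2)
          (ball 0 1 ×ˢ Ioo (0:ℝ) 1) →
        IntegrableOn (fun p : EuclideanSpace ℝ (Fin n) × ℝ => v p.1 p.2)
          (ball 0 1 ×ˢ Ioo (0:ℝ) 1) →
        (∀ p ∈ ball (0 : EuclideanSpace ℝ (Fin n)) 1 ×ˢ Ioo (0:ℝ) 1,
          DifferentiableAt ℝ (v p.1) p.2) →
        ContinuousOn (fun p : EuclideanSpace ℝ (Fin n) × ℝ => deriv (v p.1) p.2)
          (ball 0 1 ×ˢ Ioo (0:ℝ) 1) →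
        (∀ t ∈ Ioo (0:ℝ) 1, ContDiffOn ℝ 2 (fun y => v y t) (ball 0 1)) →
        ContinuousOn (fun p : EuclideanSpace ℝ (Fin n) × ℝ => hess (fun y => v y p.2) p.1)
          (ball 0 1 ×ˢ Ioo (0:ℝ) 1) →
        IntegrableOn (fun p : EuclideanSpace ℝ (Fin n) × ℝ => deriv (v p.1) p.2)
          (ball 0 1 ×ˢ Ioo (0:ℝ) 1) →
        IntegrableOn
          (fun p : EuclideanSpace ℝ (Fin n) × ℝ => Matrix.trace (hess (fun y => v y p.2) p.1))
          (ball 0 1 ×ˢ Ioo (0:ℝ) 1) →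
        (∀ p ∈ ball (0 : EuclideanSpace ℝ (Fin n)) 1 ×ˢ Ioo (0:ℝ) 1,
          deriv (v p.1) p.2 - (Lam + lam) / 2 * Matrix.trace (hess (fun y => v y p.2) p.1) ≤
            f p.1 p.2) →
        ∫ p in ball (0 : EuclideanSpace ℝ (Fin n)) (1/2) ×ˢ Ioo (1/3 : ℝ) (2/3),
            |deriv (v p.1) p.2 - (Lam + lam) / 2 * Matrix.trace (hess (fun y => v y p.2) p.1)| ≤
          C₅ * ((∫ p in ball (0 : EuclideanSpace ℝ (Fin n)) 1 ×ˢ Ioo (0:ℝ) 1, |f p.1 p.2|) +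
            ∫ p in ball (0 : EuclideanSpace ℝ (Fin n)) 1 ×ˢ Ioo (0:ℝ) 1, |v p.1 p.2|) :=
  stmt7_general n lam Lam
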